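/- arXiv:2005.03483 — 3 statements merged into one kernel-verified Lean document; each statement's English description precedes it below -/
import Mathlib

section
/- Let V be a 2m-dimensional real inner product space (m ≥ 3) with compatible complex structure J, let N be a unit vector, ξ = -JN, and let φX = JX - ⟨JX, N⟩N for X ⊥ N. Suppose S is a self-adjoint endomorphism of the hyperplane W = N^⊥ with Sξ = αξ for α ≠ 0, and suppose φ(SX) = 0 for every X ∈ W orthogonal to ξ. Then SX = 0 for all X ∈ W orthogonal to ξ, and consequently Sφ + φS = 0 on W. -/
open RealInnerProductSpace

/-- If `S` is a self-adjoint shape-type operator on the hyperplane `W = N^⊥`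
of a `2m`-dimensional space (`m ≥ 3`) with `S ξ = α ξ`, `α ≠ 0`, and `φ(S X) = 0`
for all `X ∈ W` orthogonal to `ξ`, then `S X = 0` for all such `X`, and `Sφ + φS = 0` on `W`. -/
theorem stmt_9 {V : Type*} [NormedAddCommGroup V] [InnerProductSpace ℝ V]
    [FiniteDimensional ℝ V] (m : ℕ) (hm : 3 ≤ m)
    (hdim : Module.finrank ℝ V = 2 * m)
    (J : V →ₗ[ℝ] V)
    (hJ2 : ∀ X : V, J (J X) = -X)
    (hJiso : ∀ X Y : V, ⟪J X, J Y⟫ = ⟪X, Y⟫)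
    (N ξ : V) (hN : ‖N‖ = 1) (hxi : ξ = -J N)
    (φ : V → V) (hphi : ∀ X : V, φ X = J X - ⟪J X, N⟫ • N)
    (S : V →ₗ[ℝ] V)
    (hStan : ∀ X : V, ⟪X, N⟫ = 0 → ⟪S X, N⟫ = 0)
    (hSsym : ∀ X Y : V, ⟪X, N⟫ = 0 → ⟪Y, N⟫ = 0 → ⟪S X, Y⟫ = ⟪X, S Y⟫)
    (α : ℝ) (hα : α ≠ 0) (hSxi : S ξ = α • ξ)
    (hphiS : ∀ X : V, ⟪X, N⟫ = 0 → ⟪X, ξ⟫ = 0 → φ (S X) = 0) :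
    (∀ X : V, ⟪X, N⟫ = 0 → ⟪X, ξ⟫ = 0 → S X = 0) ∧
    (∀ X : V, ⟪X, N⟫ = 0 → S (φ X) + φ (S X) = 0) := by
  have hJN_N : ⟪J N, N⟫ = 0 := by
    have h := hJiso N (J N)
    rw [hJ2 N, inner_neg_right, real_inner_comm N (J N)] at h
    rw [real_inner_comm]
    linarith
  have hxiN : ⟪ξ, N⟫ = 0 := by rw [hxi, inner_neg_left, hJN_N, neg_zero]
  have hNN : ⟪N, N⟫ = 1 := by
    rw [real_inner_self_eq_norm_mul_norm, hN, one_mul]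
  have hxixi : ⟪ξ, ξ⟫ = 1 := by
    rw [hxi, inner_neg_neg, hJiso, hNN]
  have hJxi : J ξ = N := by rw [hxi, map_neg, hJ2, neg_neg]
  have part1 : ∀ X : V, ⟪X, N⟫ = 0 → ⟪X, ξ⟫ = 0 → S X = 0 := by
    intro X hXN hXxi
    have h0 := hphiS X hXN hXxi
    rw [hphi] at h0
    have hJSX : J (S X) = ⟪J (S X), N⟫ • N := by
      have := sub_eq_zero.mp h0
      exact this
    have hSX : S X = ⟪J (S X), N⟫ • ξ := by
      have h1 := congrArg J hJSX
      rw [hJ2, map_smul] at h1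
      rw [hxi, smul_neg, ← h1, neg_neg]
    have hc : ⟪J (S X), N⟫ = 0 := by
      have h1 : ⟪S X, ξ⟫ = ⟪X, S ξ⟫ := hSsym X ξ hXN hxiN
      rw [hSxi, real_inner_smul_right, hXxi, mul_zero] at h1
      rw [hSX, real_inner_smul_left, hxixi, mul_one] at h1
      exact h1
    rw [hSX, hc, zero_smul]
  refine ⟨part1, ?_⟩
  intro X hXN
  set t := (⟪X, ξ⟫ : ℝ) with ht
  set Y := X - t • ξ with hY
  have hX : X = Y + t • ξ := by rw [hY]; abel
  have hYN : ⟪Y, N⟫ = 0 := by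
    rw [hY, inner_sub_left, real_inner_smul_left, hXN, hxiN, mul_zero, sub_zero]
  have hYxi : ⟪Y, ξ⟫ = 0 := by
    rw [hY, inner_sub_left, real_inner_smul_left, hxixi, mul_one, ← ht, sub_self]
  have hSY : S Y = 0 := part1 Y hYN hYxi
  have hSX : S X = (t * α) • ξ := by
    rw [hX, map_add, map_smul, hSY, hSxi, zero_add, smul_smul]
  have hphiSX : φ (S X) = 0 := by
    rw [hSX, hphi, map_smul, hJxi, real_inner_smul_left, hNN, mul_one, sub_self]
  have hphiX : φ X = φ Y := by
    rw [hphi, hphi, hX, map_add, map_smul, hJxi, inner_add_left,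
      real_inner_smul_left, hNN, mul_one]
    module
  have h1 : ⟪φ Y, N⟫ = 0 := by
    rw [hphi, inner_sub_left, real_inner_smul_left, hNN, mul_one, sub_self]
  have h2 : ⟪φ Y, ξ⟫ = 0 := by
    rw [hphi, inner_sub_left, real_inner_smul_left]
    have ha : ⟪J Y, ξ⟫ = 0 := by
      rw [hxi, inner_neg_right, hJiso, hYN, neg_zero]
    have hb : ⟪N, ξ⟫ = 0 := by rw [real_inner_comm, hxiN]
    rw [ha, hb, mul_zero, sub_zero]
  rw [hphiX, part1 (φ Y) h1 h2, hphiSX, add_zero]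
end

section
/- Let V be a real inner product space with compatible complex structure J and isometric involution A with AJ = -JA, and let N be a unit vector with ξ = -JN. Write BY = AY - ⟨AY, N⟩N for Y ⊥ N, and φY = JY - ⟨JY, N⟩N. Then for every Y orthogonal to N: φ(BY) + ⟨φ(Aξ), Y⟩ ξ = -B(φY) + ⟨Y, ξ⟩ φ(Aξ). -/
open RealInnerProductSpace

/-- For every `Y ⊥ N`,
`φ(B Y) + ⟪φ(Aξ), Y⟫ ξ = -B(φ Y) + ⟪Y, ξ⟫ φ(Aξ)`. -/
theorem stmt_10 {V : Type*} [NormedAddCommGroup V] [InnerProductSpace ℝ V]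
    (J A : V →ₗ[ℝ] V)
    (hJ2 : ∀ X : V, J (J X) = -X)
    (hJiso : ∀ X Y : V, ⟪J X, J Y⟫ = ⟪X, Y⟫)
    (hA2 : ∀ X : V, A (A X) = X)
    (hAiso : ∀ X Y : V, ⟪A X, A Y⟫ = ⟪X, Y⟫)
    (hAJ : ∀ X : V, A (J X) = -J (A X))
    (N ξ : V) (hN : ‖N‖ = 1) (hxi : ξ = -J N)
    (B φ : V → V)
    (hB : ∀ X : V, B X = A X - ⟪A X, N⟫ • N)
    (hphi : ∀ X : V, φ X = J X - ⟪J X, N⟫ • N) :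
    ∀ Y : V, ⟪Y, N⟫ = 0 →
      φ (B Y) + ⟪φ (A ξ), Y⟫ • ξ = -B (φ Y) + ⟪Y, ξ⟫ • φ (A ξ) := by
  intro Y hY
  have hAsa : ∀ X Z : V, ⟪A X, Z⟫ = ⟪X, A Z⟫ := fun X Z => by
    conv_lhs => rw [← hA2 Z]
    exact hAiso X (A Z)
  have hJsk : ∀ X Z : V, ⟪J X, Z⟫ = -⟪X, J Z⟫ := fun X Z => by
    have := hJiso X (J Z)
    rw [hJ2, inner_neg_right] at this
    linarith
  have hJN : ⟪J N, N⟫ = 0 := by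
    have := hJsk N N
    have h2 : ⟪N, J N⟫ = ⟪J N, N⟫ := real_inner_comm _ _
    linarith [h2 ▸ this]
  -- Aξ = J (A N)
  have hAxi : A ξ = J (A N) := by
    rw [hxi, map_neg, hAJ, neg_neg]
  have hphiAxi : φ (A ξ) = -A N + ⟪A N, N⟫ • N := by
    rw [hAxi, hphi, hJ2, inner_neg_left]
    module
  -- key scalar facts
  have s1 : ⟪A Y, N⟫ = ⟪A N, Y⟫ := by rw [hAsa, real_inner_comm]
  have s2 : ⟪Y, ξ⟫ = ⟪J Y, N⟫ := by
    rw [hxi, inner_neg_right, ← hJsk]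
  have hYN : ⟪N, Y⟫ = 0 := by rw [real_inner_comm]; exact hY
  have s3 : ⟪Y, J N⟫ = -⟪J Y, N⟫ := by rw [hJsk]; ring
  have hJAYN : ⟪A (J Y), N⟫ = -⟪J (A Y), N⟫ := by rw [hAJ, inner_neg_left]
  simp only [hAxi, hB, hphi, hxi, map_sub, map_smul, map_neg, hJ2, hAJ,
    inner_sub_left, inner_smul_left, inner_neg_left, inner_add_left,
    inner_smul_right, inner_neg_right, inner_sub_right, hJN,
    real_inner_self_eq_norm_sq, hN, s1, hYN, hJAYN, hJiso, s3, conj_trivial]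
  module
end

section
/- Let V be a 2m-dimensional real inner product space with m ≥ 3, J a compatible complex structure, A an isometric involution with AJ = -JA, N a unit vector with AN = N, and ξ = -JN. If φ(AY) = 0 for every Y orthogonal to N (where φX = JX - ⟨JX,N⟩N), then every Y orthogonal to N satisfies Y = ⟨Y, ξ⟩ξ; in particular the hyperplane N^⊥ is 1-dimensional, contradicting dim V = 2m ≥ 6. Hence no such configuration exists for m ≥ 3. -/
open RealInnerProductSpace

/-- In dimension `2m ≥ 6`, if `A N = N` and `φ(A Y) = 0` for all `Y ⊥ N`,
then every `Y ⊥ N` satisfies `Y = ⟪Y, ξ⟫ ξ`, so the hyperplane `N^⊥` is 1-dimensional,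
contradicting `dim V = 2m ≥ 6`: no such configuration exists. -/
theorem stmt_13 {V : Type*} [NormedAddCommGroup V] [InnerProductSpace ℝ V]
    [FiniteDimensional ℝ V] (m : ℕ) (hm : 3 ≤ m)
    (hdim : Module.finrank ℝ V = 2 * m)
    (J A : V →ₗ[ℝ] V)
    (hJ2 : ∀ X : V, J (J X) = -X)
    (hJiso : ∀ X Y : V, ⟪J X, J Y⟫ = ⟪X, Y⟫)
    (hA2 : ∀ X : V, A (A X) = X)
    (hAiso : ∀ X Y : V, ⟪A X, A Y⟫ = ⟪X, Y⟫)
    (hAJ : ∀ X : V, A (J X) = -J (A X))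
    (N ξ : V) (hN : ‖N‖ = 1) (hAN : A N = N) (hxi : ξ = -J N)
    (φ : V → V) (hphi : ∀ X : V, φ X = J X - ⟪J X, N⟫ • N)
    (hyp : ∀ Y : V, ⟪Y, N⟫ = 0 → φ (A Y) = 0) :
    (∀ Y : V, ⟪Y, N⟫ = 0 → Y = ⟪Y, ξ⟫ • ξ) ∧ False := by
  have hNN : ⟪N, N⟫ = (1:ℝ) := by
    rw [real_inner_self_eq_norm_sq, hN]; norm_num
  have hxixi : ⟪ξ, ξ⟫ = (1:ℝ) := by
    rw [hxi, inner_neg_neg, hJiso, hNN]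
  have hAxi : A ξ = -ξ := by
    rw [hxi, map_neg, hAJ, hAN]
  have key : ∀ Y : V, ⟪Y, N⟫ = 0 → Y = ⟪Y, ξ⟫ • ξ := by
    intro Y hY
    have h0 := hyp Y hY
    rw [hphi] at h0
    set c : ℝ := ⟪J (A Y), N⟫ with hc
    have hJAY : J (A Y) = c • N := sub_eq_zero.mp h0
    have hAY : A Y = c • ξ := by
      have h1 : J (J (A Y)) = c • J N := by rw [hJAY, map_smul]
      rw [hJ2] at h1
      rw [hxi]
      have := congrArg Neg.neg h1
      rw [neg_neg] at this
      rw [this, smul_neg]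
    have hYeq : Y = (-c) • ξ := by
      have : A (A Y) = A (c • ξ) := congrArg A hAY
      rw [hA2, map_smul, hAxi, smul_neg, ← neg_smul] at this
      exact this
    have hYxi : ⟪Y, ξ⟫ = -c := by
      rw [hYeq, real_inner_smul_left, hxixi, mul_one]
    rw [hYxi]; exact hYeq
  refine ⟨key, ?_⟩
  have hN0 : N ≠ 0 := by
    intro h; rw [h, norm_zero] at hN; norm_num at hN
  have hle : (ℝ ∙ N)ᗮ ≤ ℝ ∙ ξ := by
    intro Y hY
    have hYN : ⟪Y, N⟫ = 0 := by
      have := (Submodule.mem_orthogonal _ Y).mp hY N (Submodule.mem_span_singleton_self N)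
      rwa [real_inner_comm] at this
    rw [key Y hYN]
    exact Submodule.smul_mem _ _ (Submodule.mem_span_singleton_self ξ)
  have h1 : Module.finrank ℝ (ℝ ∙ N) = 1 := finrank_span_singleton hN0
  have h2 : Module.finrank ℝ (ℝ ∙ N) + Module.finrank ℝ (ℝ ∙ N)ᗮ = Module.finrank ℝ V :=
    Submodule.finrank_add_finrank_orthogonal _
  have h3 : Module.finrank ℝ (ℝ ∙ N)ᗮ ≤ Module.finrank ℝ (ℝ ∙ ξ) :=
    Submodule.finrank_mono hle
  have hxi0 : ξ ≠ 0 := by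
    intro h; rw [h, inner_zero_left] at hxixi; norm_num at hxixi
  have h4 : Module.finrank ℝ (ℝ ∙ ξ) = 1 := finrank_span_singleton hxi0
  omega
end
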